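/- (Young's inequality on graphs) Let s, t, w ∈ [1,∞] with 1/s + 1/t + 1/w = 1 and let p, q, r ∈ [1,∞], with p', q' the conjugate exponents of p, q. Then for every scalar signal α : V → 𝕂 and every signal f : V → X, ‖α*f‖_r ≤ ‖U*‖_{s,r} · ‖U‖_{p',t} · ‖U‖_{q',w} · ‖α‖_p · ‖f‖_q. -/

import Mathlib

open Finset
open scoped ENNReal

/-- The `L^p` norm of a signal `f : Fin N → E` (sup-norm when `p = ∞`). -/
noncomputable def gsNorm {E : Type*} [NormedAddCommGroup E] {N : ℕ} (p : ℝ≥0∞)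
    (f : Fin N → E) : ℝ :=
  if p = ∞ then ⨆ n, ‖f n‖ else (∑ n, ‖f n‖ ^ p.toReal) ^ (1 / p.toReal)

/-- `u k` is the `k`-th column of a unitary matrix, i.e. the family of columns is
orthonormal for the standard inner product on `𝕂^N` (hence an orthonormal basis). -/
def OrthoBasis {𝕂 : Type*} [RCLike 𝕂] {N : ℕ} (u : Fin N → Fin N → 𝕂) : Prop :=
  ∀ k l : Fin N, ∑ n, (starRingEnd 𝕂) (u k n) * u l n = if k = l then (1 : 𝕂) else 0

/-- Graph Fourier transform: `f̂ k = ∑ n, conj (u k n) • f n`. -/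
noncomputable def gft {𝕂 : Type*} [RCLike 𝕂] {X : Type*} [NormedAddCommGroup X]
    [NormedSpace 𝕂 X] {N : ℕ} (u : Fin N → Fin N → 𝕂) (f : Fin N → X) : Fin N → X :=
  fun k => ∑ n, (starRingEnd 𝕂) (u k n) • f n

/-- `p`-coherence `κ_p(U)`: the maximum of the `ℓ^p` norms of the columns of `U`. -/
noncomputable def coh {𝕂 : Type*} [RCLike 𝕂] {N : ℕ} (p : ℝ≥0∞)
    (u : Fin N → Fin N → 𝕂) : ℝ :=
  ⨆ k, gsNorm p (u k)

/-- Mixed norm `‖U‖_{p,q}`: the `ℓ^q` norm of the vector of `ℓ^p` norms of the columns. -/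
noncomputable def mixNorm {𝕂 : Type*} [RCLike 𝕂] {N : ℕ} (p q : ℝ≥0∞)
    (u : Fin N → Fin N → 𝕂) : ℝ :=
  gsNorm q (fun k => gsNorm p (u k))

/-- Graph convolution of a scalar signal `α` with a signal `f`:
`(α*f)(n) = ∑ k, u k n • (α̂ k • f̂ k)`. -/
noncomputable def gconv {𝕂 : Type*} [RCLike 𝕂] {X : Type*} [NormedAddCommGroup X]
    [NormedSpace 𝕂 X] {N : ℕ} (u : Fin N → Fin N → 𝕂) (α : Fin N → 𝕂)
    (f : Fin N → X) : Fin N → X :=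
  fun n => ∑ k, u k n • (gft u α k • gft u f k)

/-- Graph translation operator `T_m f (n) = ∑ k, (u k n * conj (u k m)) • f̂ k`. -/
noncomputable def gtrans {𝕂 : Type*} [RCLike 𝕂] {X : Type*} [NormedAddCommGroup X]
    [NormedSpace 𝕂 X] {N : ℕ} (u : Fin N → Fin N → 𝕂) (m : Fin N)
    (f : Fin N → X) : Fin N → X :=
  fun n => ∑ k, (u k n * (starRingEnd 𝕂) (u k m)) • gft u f k

/-! Hölder's inequality bounds each Fourier coefficient, `‖α̂ k‖ ≤ ‖u k‖_{p'} ‖α‖_p` and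
`‖f̂ k‖ ≤ ‖u k‖_{q'} ‖f‖_q`, so `‖(α*f) n‖ ≤ ‖α‖_p ‖f‖_q ∑ k, |u k n| ‖u k‖_{p'} ‖u k‖_{q'}`.
Hölder's inequality for the three exponents `s, t, w` bounds this sum by
`‖u(n)‖_s ‖U‖_{p',t} ‖U‖_{q',w}`, and taking the `ℓ^r` norm in `n` produces `‖U*‖_{s,r}`.
The finite-sum Hölder inequalities are those for the counting measure on `Fin N`. -/

open MeasureTheory

theorem MeasureTheory.eLpNorm_count_ne_top {α : Type*} [MeasurableSpace α] [Finite α]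
    {E : Type*} [NormedAddCommGroup E] (p : ℝ≥0∞) (f : α → E) : eLpNorm f p .count ≠ ∞ :=
  (eLpNorm_count_lt_top_of_lt fun _ => enorm_lt_top).ne

section SignalNorm

variable {N : ℕ} {E F G : Type*} [NormedAddCommGroup E] [NormedAddCommGroup F]
  [NormedAddCommGroup G]

-- Needs `p ≠ 0`: `gsNorm 0 f = 1`, since `x ^ (0 : ℝ) = 1`.
theorem gsNorm_eq_toReal_eLpNorm {p : ℝ≥0∞} (hp : p ≠ 0) (f : Fin N → E) :
    gsNorm p f = (eLpNorm f p .count).toReal := by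
  unfold gsNorm
  split_ifs with hp_top
  · subst hp_top
    simp [eLpNorm_exponent_top, ENNReal.toReal_iSup]
  · rw [eLpNorm_eq_lintegral_rpow_enorm_toReal hp hp_top]
    simp only [lintegral_fintype, Measure.count_singleton, mul_one, one_div]
    rw [← ENNReal.toReal_rpow, ENNReal.toReal_sum fun _ _ => by finiteness]
    simp [← ENNReal.toReal_rpow]

theorem gsNorm_nonneg (p : ℝ≥0∞) (f : Fin N → E) : 0 ≤ gsNorm p f := by
  unfold gsNorm
  split_ifs
  · exact Real.iSup_nonneg fun n => norm_nonneg _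
  · exact Real.rpow_nonneg (Finset.sum_nonneg fun n _ => Real.rpow_nonneg (norm_nonneg _) _) _

theorem gsNorm_congr_norm (p : ℝ≥0∞) {f : Fin N → E} {g : Fin N → F}
    (h : ∀ n, ‖f n‖ = ‖g n‖) : gsNorm p f = gsNorm p g := by
  unfold gsNorm
  simp only [h]

theorem gsNorm_one (f : Fin N → E) : gsNorm 1 f = ∑ n, ‖f n‖ := by
  simp [gsNorm]

theorem gsNorm_mono {p : ℝ≥0∞} (hp : p ≠ 0) {f : Fin N → E} {g : Fin N → F}
    (h : ∀ n, ‖f n‖ ≤ ‖g n‖) : gsNorm p f ≤ gsNorm p g := by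
  rw [gsNorm_eq_toReal_eLpNorm hp, gsNorm_eq_toReal_eLpNorm hp]
  exact ENNReal.toReal_mono (eLpNorm_count_ne_top p g) (eLpNorm_mono h)

theorem gsNorm_smul {𝕜 : Type*} [NormedField 𝕜] [NormedSpace 𝕜 E] {p : ℝ≥0∞} (hp : p ≠ 0)
    (c : 𝕜) (f : Fin N → E) : gsNorm p (c • f) = ‖c‖ * gsNorm p f := by
  rw [gsNorm_eq_toReal_eLpNorm hp, gsNorm_eq_toReal_eLpNorm hp, eLpNorm_const_smul,
    ENNReal.toReal_mul, toReal_enorm]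

theorem gsNorm_mul_le {R : Type*} [NormedRing R] {a b c : ℝ≥0∞} [a.HolderTriple b c]
    (hc : c ≠ 0) (f g : Fin N → R) : gsNorm c (fun n => f n * g n) ≤ gsNorm a f * gsNorm b g := by
  have ha : a ≠ 0 := (pos_iff_ne_zero.2 hc).trans_le (ENNReal.HolderTriple.le a b c) |>.ne'
  have hb : b ≠ 0 := (pos_iff_ne_zero.2 hc).trans_le (ENNReal.HolderTriple.le b a c) |>.ne'
  rw [gsNorm_eq_toReal_eLpNorm hc, gsNorm_eq_toReal_eLpNorm ha, gsNorm_eq_toReal_eLpNorm hb,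
    ← ENNReal.toReal_mul]
  refine ENNReal.toReal_mono (by finiteness [eLpNorm_count_ne_top a f, eLpNorm_count_ne_top b g]) ?_
  simpa using eLpNorm_le_eLpNorm_mul_eLpNorm'_of_norm (μ := .count) (p := a) (q := b) (r := c)
    (f := f) (g := g) .of_discrete .of_discrete (· * ·) 1
    (.of_forall fun n => by simpa using norm_mul_le (f n) (g n))

theorem sum_norm_mul_norm_le {a b : ℝ≥0∞} [a.HolderConjugate b] (f : Fin N → E)
    (g : Fin N → F) : ∑ n, ‖f n‖ * ‖g n‖ ≤ gsNorm a f * gsNorm b g := by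
  calc ∑ n, ‖f n‖ * ‖g n‖ = gsNorm 1 (fun n => ‖f n‖ * ‖g n‖) := by
        rw [gsNorm_one]
        simp only [norm_mul, norm_norm]
    _ ≤ gsNorm a (fun n => ‖f n‖) * gsNorm b (fun n => ‖g n‖) := gsNorm_mul_le one_ne_zero _ _
    _ = gsNorm a f * gsNorm b g := by
        rw [gsNorm_congr_norm a fun n => norm_norm (f n),
          gsNorm_congr_norm b fun n => norm_norm (g n)]

theorem sum_norm_mul_norm_mul_norm_le {s t w : ℝ≥0∞} (hstw : s⁻¹ + t⁻¹ + w⁻¹ = 1)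
    (f : Fin N → E) (g : Fin N → F) (h : Fin N → G) :
    ∑ n, ‖f n‖ * ‖g n‖ * ‖h n‖ ≤ gsNorm s f * gsNorm t g * gsNorm w h := by
  set m := (t⁻¹ + w⁻¹)⁻¹
  have : t.HolderTriple w m := .of t w
  have : s.HolderConjugate m := ENNReal.holderConjugate_iff.2 (by rw [inv_inv, ← add_assoc, hstw])
  have hgh : gsNorm m (fun n => ‖g n‖ * ‖h n‖) ≤ gsNorm t g * gsNorm w h := by
    calc gsNorm m (fun n => ‖g n‖ * ‖h n‖)
        ≤ gsNorm t (fun n => ‖g n‖) * gsNorm w (fun n => ‖h n‖) :=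
          gsNorm_mul_le (ENNReal.HolderConjugate.ne_zero m s) _ _
      _ = gsNorm t g * gsNorm w h := by
          rw [gsNorm_congr_norm t fun n => norm_norm (g n),
            gsNorm_congr_norm w fun n => norm_norm (h n)]
  calc ∑ n, ‖f n‖ * ‖g n‖ * ‖h n‖ = ∑ n, ‖f n‖ * ‖‖g n‖ * ‖h n‖‖ := by
        simp only [norm_mul, norm_norm, mul_assoc]
    _ ≤ gsNorm s f * gsNorm m (fun n => ‖g n‖ * ‖h n‖) := sum_norm_mul_norm_le _ _
    _ ≤ gsNorm s f * gsNorm t g * gsNorm w h := by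
        rw [mul_assoc]
        exact mul_le_mul_of_nonneg_left hgh (gsNorm_nonneg s f)

end SignalNorm

section GraphFourier

variable {𝕂 : Type*} [RCLike 𝕂] {X : Type*} [NormedAddCommGroup X] [NormedSpace 𝕂 X] {N : ℕ}

theorem norm_gft_le {q q' : ℝ≥0∞} [q'.HolderConjugate q] (u : Fin N → Fin N → 𝕂)
    (f : Fin N → X) (k : Fin N) : ‖gft u f k‖ ≤ gsNorm q' (u k) * gsNorm q f :=
  calc ‖gft u f k‖ ≤ ∑ n, ‖u k n‖ * ‖f n‖ :=
        (norm_sum_le _ _).trans_eq (by simp only [norm_smul, RCLike.norm_conj])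
    _ ≤ gsNorm q' (u k) * gsNorm q f := sum_norm_mul_norm_le _ _

theorem norm_gconv_le {s t w p p' q q' : ℝ≥0∞} (hstw : s⁻¹ + t⁻¹ + w⁻¹ = 1)
    [p'.HolderConjugate p] [q'.HolderConjugate q] (u : Fin N → Fin N → 𝕂) (α : Fin N → 𝕂)
    (f : Fin N → X) (n : Fin N) :
    ‖gconv u α f n‖ ≤ mixNorm p' t u * mixNorm q' w u * gsNorm p α * gsNorm q f *
      gsNorm s (fun k => u k n) := by
  set A := fun k => gsNorm p' (u k)
  set B := fun k => gsNorm q' (u k)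
  have hA : ∀ k, ‖A k‖ = A k := fun k => Real.norm_of_nonneg (gsNorm_nonneg _ _)
  have hB : ∀ k, ‖B k‖ = B k := fun k => Real.norm_of_nonneg (gsNorm_nonneg _ _)
  calc ‖gconv u α f n‖ ≤ ∑ k, ‖u k n‖ * (‖gft u α k‖ * ‖gft u f k‖) :=
        (norm_sum_le _ _).trans_eq (by simp only [norm_smul])
    _ ≤ ∑ k, ‖u k n‖ * (A k * gsNorm p α * (B k * gsNorm q f)) := by
        refine Finset.sum_le_sum fun k _ => mul_le_mul_of_nonneg_left ?_ (norm_nonneg _)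
        exact mul_le_mul (norm_gft_le u α k) (norm_gft_le u f k) (norm_nonneg _)
          (mul_nonneg (gsNorm_nonneg _ _) (gsNorm_nonneg _ _))
    _ = gsNorm p α * gsNorm q f * ∑ k, ‖u k n‖ * ‖A k‖ * ‖B k‖ := by
        simp only [hA, hB, Finset.mul_sum]
        exact Finset.sum_congr rfl fun k _ => by ring
    _ ≤ gsNorm p α * gsNorm q f * (gsNorm s (fun k => u k n) * gsNorm t A * gsNorm w B) := by
        gcongr
        · exact mul_nonneg (gsNorm_nonneg p α) (gsNorm_nonneg q f)
        · exact sum_norm_mul_norm_mul_norm_le hstw _ _ _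
    _ = _ := by
        unfold mixNorm
        ring

end GraphFourier

theorem gconv_young_general {𝕂 : Type*} [RCLike 𝕂] {X : Type*} [NormedAddCommGroup X]
    [NormedSpace 𝕂 X] {N : ℕ}
    (u : Fin N → Fin N → 𝕂)
    (s t w : ℝ≥0∞)
    (hstw : 1 / s + 1 / t + 1 / w = 1)
    (p p' q q' r : ℝ≥0∞) (hr : 1 ≤ r)
    (hpp' : 1 / p + 1 / p' = 1) (hqq' : 1 / q + 1 / q' = 1)
    (α : Fin N → 𝕂) (f : Fin N → X) :
    gsNorm r (gconv u α f) ≤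
      mixNorm s r (fun n k => u k n) * mixNorm p' t u * mixNorm q' w u *
        gsNorm p α * gsNorm q f := by
  have : p'.HolderConjugate p :=
    ENNReal.holderConjugate_iff.2 (by rw [add_comm]; simpa only [one_div] using hpp')
  have : q'.HolderConjugate q :=
    ENNReal.holderConjugate_iff.2 (by rw [add_comm]; simpa only [one_div] using hqq')
  have hstw' : s⁻¹ + t⁻¹ + w⁻¹ = 1 := by simpa only [one_div] using hstw
  have hr0 : r ≠ 0 := (zero_lt_one.trans_le hr).ne'
  set C := mixNorm p' t u * mixNorm q' w u * gsNorm p α * gsNorm q f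
  have hC : 0 ≤ C := mul_nonneg (mul_nonneg (mul_nonneg (gsNorm_nonneg _ _)
    (gsNorm_nonneg _ _)) (gsNorm_nonneg _ _)) (gsNorm_nonneg _ _)
  calc gsNorm r (gconv u α f) ≤ gsNorm r (C • fun n => gsNorm s (fun k => u k n)) :=
        gsNorm_mono hr0 fun n => (norm_gconv_le hstw' u α f n).trans (Real.le_norm_self _)
    _ = _ := by
        rw [gsNorm_smul hr0, Real.norm_of_nonneg hC]
        unfold C mixNorm
        ring

/-- Young's inequality on graphs:
`‖α*f‖_r ≤ ‖U*‖_{s,r}·‖U‖_{p',t}·‖U‖_{q',w}·‖α‖_p·‖f‖_q`. -/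
theorem gconv_young {𝕂 : Type*} [RCLike 𝕂] {X : Type*} [NormedAddCommGroup X]
    [NormedSpace 𝕂 X] [CompleteSpace X] {N : ℕ} (hN : 0 < N)
    (u : Fin N → Fin N → 𝕂) (hU : OrthoBasis u)
    (s t w : ℝ≥0∞) (hs : 1 ≤ s) (ht : 1 ≤ t) (hw : 1 ≤ w)
    (hstw : 1 / s + 1 / t + 1 / w = 1)
    (p p' q q' r : ℝ≥0∞) (hp : 1 ≤ p) (hq : 1 ≤ q) (hr : 1 ≤ r)
    (hpp' : 1 / p + 1 / p' = 1) (hqq' : 1 / q + 1 / q' = 1)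
    (α : Fin N → 𝕂) (f : Fin N → X) :
    gsNorm r (gconv u α f) ≤
      mixNorm s r (fun n k => u k n) * mixNorm p' t u * mixNorm q' w u *
        gsNorm p α * gsNorm q f :=
  gconv_young_general u s t w hstw p p' q q' r hr hpp' hqq' α f
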